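/- Let π be a probability distribution on a finite action set A, Q : A → ℝ≥0, V := E_π[Q] > 0, and q(a) := π(a)Q(a)/V the ideal posterior. Let q_T be any probability distribution on A, and define ε := |E_{a∼q_T}[Q(a)] − E_{a∼q}[Q(a)]|. For 0 < η < 1 let π̃_η(a) := (1−η)π(a) + η q_T(a). Then E_{π̃_η}[Q] − V ≥ η (Var_{a∼π}[Q]/V − ε). -/
import Mathlib


open Finset

theorem stmt_3 {A : Type*} [Fintype A] (π Q : A → ℝ)
    (hπ : ∀ a, 0 ≤ π a) (hπ1 : ∑ a, π a = 1)
    (hQ : ∀ a, 0 ≤ Q a)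
    (V : ℝ) (hV : V = ∑ a, π a * Q a) (hVpos : 0 < V)
    (q : A → ℝ) (hq : ∀ a, q a = π a * Q a / V)
    (qT : A → ℝ) (hqT : ∀ a, 0 ≤ qT a) (hqT1 : ∑ a, qT a = 1)
    (ε : ℝ) (hε : ε = |(∑ a, qT a * Q a) - ∑ a, q a * Q a|)
    (η : ℝ) (hη : 0 < η) (hη1 : η < 1)
    (πη : A → ℝ) (hπη : ∀ a, πη a = (1 - η) * π a + η * qT a)
    (Var : ℝ) (hVar : Var = ∑ a, π a * (Q a)^2 - V^2) :
    (∑ a, πη a * Q a) - V ≥ η * (Var / V - ε) := by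
  have hqQ : (∑ a, q a * Q a) = Var / V + V := by
    have h1 : (∑ a, q a * Q a) = (∑ a, π a * Q a ^ 2) / V := by
      simp only [hq]
      rw [Finset.sum_div]
      exact Finset.sum_congr rfl fun a _ => by ring
    rw [h1, hVar]
    field_simp
    ring
  have hsum : (∑ a, πη a * Q a) = (1 - η) * V + η * ∑ a, qT a * Q a := by
    simp only [hπη, hV]
    rw [Finset.mul_sum, Finset.mul_sum, ← Finset.sum_add_distrib]
    apply Finset.sum_congr rfl
    intro a _
    ring
  have hεge : (∑ a, qT a * Q a) ≥ (∑ a, q a * Q a) - ε := by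
    rw [hε]
    have := neg_abs_le ((∑ a, qT a * Q a) - ∑ a, q a * Q a)
    linarith
  rw [hsum]
  have : (∑ a, qT a * Q a) ≥ Var / V + V - ε := by rw [← hqQ]; linarith
  nlinarith
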